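/- arXiv:1804.01888 — 2 statements merged into one kernel-verified Lean document; each statement's English description precedes it below -/
import Mathlib

section
/- Let A be a k-algebra with center Z a domain. Then κ(A[t]/Z[t]) = κ(A/Z) ⊗_k k[t], where for an algebra R with center S, κ(R/S) = {z ∈ S : z·τ(R/S) = 0} and τ(R/S) is the S-torsion ideal of R. -/
/-- The set `τ(R/Z(R))` of `Z(R)`-torsion elements of `R`: elements annihilated by some nonzero
central element. -/
def tauSet (R : Type) [Ring R] : Set R :=
  {r | ∃ z : Subring.center R, z ≠ 0 ∧ (z : R) * r = 0}

/-- The annihilator `κ(R/Z(R))` of the torsion ideal: central elements annihilating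
`τ(R/Z(R))`. -/
def kappaSet (R : Type) [Ring R] : Set R :=
  {s | s ∈ Subring.center R ∧ ∀ r ∈ tauSet R, s * r = 0}

open Polynomial

namespace Polynomial

theorem mem_center_iff_coeff {A : Type*} [Ring A] {p : A[X]} :
    p ∈ Subring.center A[X] ↔ ∀ n, p.coeff n ∈ Subring.center A := by
  simp only [Subring.mem_center_iff]
  constructor
  · intro h n a
    simpa only [coeff_C_mul, coeff_mul_C] using congrArg (coeff · n) (h (C a))
  · intro h q
    ext n
    rw [coeff_mul, coeff_mul, ← Finset.Nat.sum_antidiagonal_swap]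
    exact Finset.sum_congr rfl fun x _ => h x.1 (q.coeff x.2)

theorem C_mem_center {A : Type*} [Ring A] {a : A} (ha : a ∈ Subring.center A) :
    C a ∈ Subring.center A[X] :=
  mem_center_iff_coeff.mpr fun n => by
    rw [coeff_C]
    split_ifs
    exacts [ha, zero_mem _]

end Polynomial

section Torsion

variable {A : Type} [Ring A]

theorem zero_mem_tauSet [Nontrivial (Subring.center A)] : (0 : A) ∈ tauSet A :=
  ⟨1, one_ne_zero, mul_zero _⟩

theorem mem_tauSet_of_mul_mem [NoZeroDivisors (Subring.center A)] {s : Subring.center A}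
    (hs : s ≠ 0) {a : A} (h : (s : A) * a ∈ tauSet A) : a ∈ tauSet A := by
  obtain ⟨t, ht, hta⟩ := h
  exact ⟨t * s, mul_ne_zero ht hs, by rw [Subring.coe_mul, mul_assoc, hta]⟩

theorem C_mem_tauSet {a : A} (ha : a ∈ tauSet A) : C a ∈ tauSet A[X] := by
  obtain ⟨s, hs, hsa⟩ := ha
  refine ⟨⟨C (s : A), C_mem_center s.2⟩, fun h => hs ?_, ?_⟩
  · exact Subtype.ext (C_eq_zero.mp (congrArg Subtype.val h))
  · rw [← C_mul, hsa, C_0]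

/-- Induction on the degree of `r`: the leading coefficient of `z * r` shows that a nonzero
central `s` kills the leading coefficient of `r`, and `C s * r` has smaller degree. -/
theorem coeff_mem_tauSet_of_mul_eq_zero [IsDomain (Subring.center A)] {z : A[X]}
    (hz : z ∈ Subring.center A[X]) (hz0 : z ≠ 0) {r : A[X]} (hzr : z * r = 0) (n : ℕ) :
    r.coeff n ∈ tauSet A := by
  induction hN : r.natDegree using Nat.strong_induction_on generalizing r n with
  | _ N ih =>
  subst hN
  have hlead : r.leadingCoeff ∈ tauSet A := by
    refine ⟨⟨z.leadingCoeff, mem_center_iff_coeff.mp hz _⟩, ?_, ?_⟩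
    · exact fun h => hz0 (leadingCoeff_eq_zero.mp (congrArg Subtype.val h))
    · rw [← coeff_mul_degree_add_degree, hzr, coeff_zero]
  obtain ⟨s, hs, hsr⟩ := hlead
  rcases lt_trichotomy n r.natDegree with hn | rfl | hn
  · have hzsr : z * (C (s : A) * r) = 0 := by
      rw [← mul_assoc, ← (Subring.mem_center_iff.mp hz _), mul_assoc, hzr, mul_zero]
    have hdeg : (C (s : A) * r).natDegree < r.natDegree := by
      have hle := natDegree_le_pred (natDegree_C_mul_le (s : A) r) (by rwa [coeff_C_mul])
      omega
    apply mem_tauSet_of_mul_mem hs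
    rw [← coeff_C_mul]
    exact ih _ hdeg hzsr n rfl
  · exact ⟨s, hs, hsr⟩
  · rw [coeff_eq_zero_of_natDegree_lt hn]
    exact zero_mem_tauSet

theorem coeff_mem_tauSet [IsDomain (Subring.center A)] {r : A[X]} (hr : r ∈ tauSet A[X])
    (n : ℕ) : r.coeff n ∈ tauSet A := by
  obtain ⟨z, hz0, hzr⟩ := hr
  exact coeff_mem_tauSet_of_mul_eq_zero z.2 (fun h => hz0 (Subtype.ext h)) hzr n

end Torsion

section Kappa

variable {A : Type} [Ring A] {p : A[X]}

theorem coeff_mem_kappaSet (hp : p ∈ kappaSet A[X]) (n : ℕ) : p.coeff n ∈ kappaSet A := by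
  refine ⟨mem_center_iff_coeff.mp hp.1 n, fun r hr => ?_⟩
  simpa only [coeff_mul_C, coeff_zero] using congrArg (coeff · n) (hp.2 _ (C_mem_tauSet hr))

theorem mem_kappaSet_of_coeff [IsDomain (Subring.center A)] (h : ∀ n, p.coeff n ∈ kappaSet A) :
    p ∈ kappaSet A[X] := by
  refine ⟨mem_center_iff_coeff.mpr fun n => (h n).1, fun r hr => ?_⟩
  ext n
  rw [coeff_mul, coeff_zero]
  exact Finset.sum_eq_zero fun x _ => (h x.1).2 _ (coeff_mem_tauSet hr x.2)

end Kappa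

theorem stmt_10_general (A : Type) [Ring A]
    [IsDomain (Subring.center A)] :
    kappaSet (Polynomial A) = {p : Polynomial A | ∀ n : ℕ, p.coeff n ∈ kappaSet A} :=
  Set.ext fun _ => ⟨coeff_mem_kappaSet, mem_kappaSet_of_coeff⟩

/-- For a `k`-algebra `A` whose center `Z` is a domain,
`κ(A[t]/Z[t]) = κ(A/Z) ⊗ k[t]`: the annihilator ideal of the polynomial ring `A[t]` over its
center `Z[t]` consists exactly of the polynomials all of whose coefficients lie in
`κ(A/Z)`. -/
theorem stmt_10 (k : Type) [Field k] (A : Type) [Ring A] [Algebra k A]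
    [IsDomain (Subring.center A)] :
    kappaSet (Polynomial A) = {p : Polynomial A | ∀ n : ℕ, p.coeff n ∈ kappaSet A} :=
  stmt_10_general A
end

section
/- Every nonzero non-invertible element of the polynomial ring k[t] over a field k is effective in k[t] (in the sense of Bell-Zhang): in particular, for any such f ∈ k[t] and any N-filtered PI algebra T with associated graded ring a domain, and any element y ∈ T with deg_T(y) > deg(f's variable t) that is linearly independent from 1, either f(y) = 0 or deg_T f(y) > deg f. -/
/-- The filtration degree of an element: the least `n` with `x ∈ F n`. -/
noncomputable def fdeg {k T : Type} [Field k] [Ring T] [Module k T]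
    (F : ℕ → Submodule k T) (x : T) : ℕ :=
  sInf {n | x ∈ F n}

lemma fdeg_mem {k T : Type} [Field k] [Ring T] [Module k T]
    (F : ℕ → Submodule k T) (x : T) (hexh : ∃ n, x ∈ F n) :
    x ∈ F (fdeg F x) := by
  have : {n | x ∈ F n}.Nonempty := hexh
  exact Nat.sInf_mem this

lemma fdeg_le {k T : Type} [Field k] [Ring T] [Module k T]
    (F : ℕ → Submodule k T) (x : T) {m : ℕ} (h : x ∈ F m) :
    fdeg F x ≤ m := Nat.sInf_le h

lemma fdeg_zero {k T : Type} [Field k] [Ring T] [Module k T]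
    (F : ℕ → Submodule k T) : fdeg F (0 : T) = 0 :=
  Nat.le_zero.mp (fdeg_le F 0 (Submodule.zero_mem _))

lemma fdeg_smul {k T : Type} [Field k] [Ring T] [Module k T]
    (F : ℕ → Submodule k T) (c : k) (hc : c ≠ 0) (x : T) :
    fdeg F (c • x) = fdeg F x := by
  unfold fdeg
  congr 1
  ext n
  exact Submodule.smul_mem_iff _ hc

/-- Every nonzero non-invertible `f ∈ k[t]` is effective in `k[t]`: for every
`ℕ`-filtered PI algebra `T` whose associated graded ring is a domain (encoded by the additivity
of the filtration degree on nonzero products) and every `y ∈ T` linearly independent from `1`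
with `deg_T y > 1 = deg t`, one has `f(y) ≠ 0` and
`deg_T f(y) = (deg f)·(deg_T y) > deg f`. -/
theorem stmt_15 (k : Type) [Field k] (f : Polynomial k)
    (hf0 : f ≠ 0) (hfu : ¬ IsUnit f)
    (T : Type) [Ring T] [Algebra k T]
    (F : ℕ → Submodule k T) (hmono : Monotone F) (hone : (1 : T) ∈ F 0)
    (hmul : ∀ (i j : ℕ) (a b : T), a ∈ F i → b ∈ F j → a * b ∈ F (i + j))
    (hexh : ∀ t : T, ∃ n, t ∈ F n)
    (hPI : ∃ (m : ℕ) (p : FreeAlgebra k (Fin m)), p ≠ 0 ∧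
      ∀ v : Fin m → T, FreeAlgebra.lift k v p = 0)
    (hdom : ∀ a b : T, a ≠ 0 → b ≠ 0 → fdeg F (a * b) = fdeg F a + fdeg F b)
    (y : T) (hy : y ∉ Submodule.span k ({1} : Set T))
    (hdegy : 1 < fdeg F y) :
    Polynomial.aeval y f ≠ 0 ∧
    fdeg F (Polynomial.aeval y f) = f.natDegree * fdeg F y ∧
    f.natDegree < fdeg F (Polynomial.aeval y f) := by
  set d := fdeg F y with hd
  have hy0 : y ≠ 0 := fun h => hy (h ▸ Submodule.zero_mem _)
  have : Nontrivial T := nontrivial_of_ne y 0 hy0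
  have hn1 : 1 ≤ f.natDegree := by
    by_contra h
    push_neg at h
    have h0 : f.natDegree = 0 := Nat.lt_one_iff.mp h
    have heq := Polynomial.eq_C_of_natDegree_eq_zero h0
    rw [heq] at hf0 hfu
    exact hfu (Polynomial.isUnit_C.mpr (IsUnit.mk0 _ fun hc => hf0 (by rw [hc, map_zero])))
  set n := f.natDegree with hn
  have hd2 : 2 ≤ d := hdegy
  -- powers of y
  have hpow : ∀ m : ℕ, y ^ m ≠ 0 ∧ fdeg F (y ^ m) = m * d := by
    intro m
    induction m with
    | zero =>
      refine ⟨by simp, ?_⟩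
      simpa using Nat.le_zero.mp (fdeg_le F (1 : T) hone)
    | succ m ih =>
      have hmul' : fdeg F (y ^ (m + 1)) = m * d + d := by
        rw [pow_succ]
        rw [hdom _ _ ih.1 hy0, ih.2]
      constructor
      · intro h0
        rw [h0, fdeg_zero] at hmul'
        omega
      · rw [hmul']; ring
  -- membership of powers
  have hpowmem : ∀ m : ℕ, y ^ m ∈ F (m * d) := fun m => by
    have := fdeg_mem F (y ^ m) (hexh _)
    rwa [(hpow m).2] at this
  -- decompose aeval
  have hc : f.coeff n ≠ 0 := by
    simpa [hn] using Polynomial.leadingCoeff_ne_zero.mpr hf0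
  have hsum : Polynomial.aeval y f =
      (∑ i ∈ Finset.range n, f.coeff i • y ^ i) + f.coeff n • y ^ n := by
    rw [Polynomial.aeval_eq_sum_range, Finset.sum_range_succ]
  set L := ∑ i ∈ Finset.range n, f.coeff i • y ^ i with hL
  have hnd2 : 2 ≤ n * d := le_trans hd2 (Nat.le_mul_of_pos_left d hn1)
  -- L has small degree
  have hLmem : L ∈ F (n * d - 1) := by
    apply Submodule.sum_mem
    intro i hi
    have hi' : i < n := Finset.mem_range.mp hi
    have : i * d ≤ n * d - 1 := by
      have : i * d ≤ (n - 1) * d := Nat.mul_le_mul_right d (by omega)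
      have h2 : (n - 1) * d = n * d - d := by
        rw [Nat.sub_mul, one_mul]
      omega
    exact Submodule.smul_mem _ _ (hmono this (hpowmem i))
  -- leading term
  have hlead : fdeg F (f.coeff n • y ^ n) = n * d := by
    rw [fdeg_smul F _ hc, (hpow n).2]
  have hleadnot : f.coeff n • y ^ n ∉ F (n * d - 1) := by
    intro h
    have := fdeg_le F _ h
    omega
  have hSnot : Polynomial.aeval y f ∉ F (n * d - 1) := by
    intro h
    apply hleadnot
    have : f.coeff n • y ^ n = Polynomial.aeval y f - L := by
      rw [hsum]; abel
    rw [this]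
    exact Submodule.sub_mem _ h hLmem
  have hSmem : Polynomial.aeval y f ∈ F (n * d) := by
    rw [hsum]
    exact Submodule.add_mem _ (hmono (by omega) hLmem)
      (Submodule.smul_mem _ _ (hpowmem n))
  have hSne : Polynomial.aeval y f ≠ 0 := by
    intro h
    exact hSnot (h ▸ Submodule.zero_mem _)
  have hfdegS : fdeg F (Polynomial.aeval y f) = n * d := by
    refine le_antisymm (fdeg_le F _ hSmem) ?_
    by_contra h
    push_neg at h
    have hle : fdeg F (Polynomial.aeval y f) ≤ n * d - 1 := by omega
    exact hSnot (hmono hle (fdeg_mem F _ (hexh _)))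
  refine ⟨hSne, hfdegS, ?_⟩
  rw [hfdegS]
  exact lt_of_lt_of_le (by omega : n < n * 2) (Nat.mul_le_mul_left n hd2)
end
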